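/- arXiv:1301.1954 — 4 statements merged into one kernel-verified Lean document; each statement's English description precedes it below -/
import Mathlib

section
/- Let X, Y ∈ R^{m×n}. Then the Procrustean fitting-error satisfies ε²(X,Y) := inf{‖QX − Y‖_F² : Q ∈ R^{m×m}, QᵀQ = I_m} = ‖X‖_F² + ‖Y‖_F² − 2·Σ_{i=1}^{m} σ_i(YXᵀ), and the infimum is attained by some orthogonal matrix Q. -/
/-!
Writing `A := Y Xᵀ`, orthogonality of `Q` gives `‖QX − Y‖_F² = ‖X‖_F² + ‖Y‖_F² − 2 tr(QᵀA)`, so the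
problem is to maximise `tr(QᵀA)` over orthogonal `Q`. Take the polar decomposition `A = W|A|` with
`|A| = (AᵀA)^{1/2}` and `W` orthogonal (`|A|x ↦ Ax` is isometric since `|A|² = AᵀA`, and extends to
an isometry of the whole space); then `tr(QᵀA) = tr(U|A|)` with `U = QᵀW` orthogonal, and
`tr(U P) ≤ tr P` for every positive semidefinite `P`, with equality at `U = 1`, i.e. `Q = W`.
Finally `tr |A| = Σ √λᵢ(AᵀA) = Σ σᵢ(A)`.
-/

open Matrix MeasureTheory ProbabilityTheory Filter Finset
open scoped BigOperators Topology

noncomputable section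

/-- i-th largest eigenvalue (descending order, `λ_i`) of a real square matrix
(junk value 0 if the matrix is not symmetric). -/
def eigsDesc {m : ℕ} (M : Matrix (Fin m) (Fin m) ℝ) : Fin m → ℝ :=
  if h : M.IsHermitian then
    fun i => (h.eigenvalues ∘ Tuple.sort h.eigenvalues) i.rev
  else 0

/-- i-th largest singular value of a real square matrix:  `σ_i(C) = √(λ_i(CᵀC))`. -/
def svals {m : ℕ} (C : Matrix (Fin m) (Fin m) ℝ) : Fin m → ℝ :=
  fun i => Real.sqrt (eigsDesc (Cᵀ * C) i)

/-- squared Frobenius norm -/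
def frobSq {m n : ℕ} (C : Matrix (Fin m) (Fin n) ℝ) : ℝ :=
  ∑ i, ∑ j, (C i j) ^ 2

/-- Frobenius norm -/
def frobNorm {m n : ℕ} (C : Matrix (Fin m) (Fin n) ℝ) : ℝ :=
  Real.sqrt (frobSq C)

open scoped MatrixOrder

theorem exists_linearIsometry_apply_eq_of_norm_eq {𝕜 E V : Type*} [RCLike 𝕜]
    [AddCommGroup E] [Module 𝕜 E] [NormedAddCommGroup V] [InnerProductSpace 𝕜 V]
    [FiniteDimensional 𝕜 V] (p f : E →ₗ[𝕜] V) (h : ∀ x, ‖p x‖ = ‖f x‖) :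
    ∃ g : V →ₗᵢ[𝕜] V, ∀ x, g (p x) = f x := by
  obtain ⟨s, hs⟩ := p.rangeRestrict.exists_rightInverse_of_surjective p.range_rangeRestrict
  have hps : ∀ y, p (s y) = y := fun y => congr($(LinearMap.congr_fun hs y).1)
  -- `f ∘ s` does not depend on the choice of `s`, because `ker p ≤ ker f`.
  have hfs : ∀ x, f (s (p.rangeRestrict x)) = f x := by
    intro x
    rw [← sub_eq_zero, ← map_sub, ← norm_eq_zero, ← h, map_sub, hps]
    simp
  let L : LinearMap.range p →ₗᵢ[𝕜] V := ⟨f ∘ₗ s, fun y => by simp [← h, hps]⟩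
  exact ⟨L.extend, fun x => by
    simpa [L] using (L.extend_apply (p.rangeRestrict x)).trans (hfs x)⟩

namespace Matrix

variable {𝕜 n : Type*} [RCLike 𝕜] [Fintype n] [DecidableEq n]

theorem exists_mem_unitaryGroup_mul_abs_eq (A : Matrix n n 𝕜) :
    ∃ W ∈ unitaryGroup n 𝕜, W * CFC.abs A = A := by
  set T := toEuclideanCLM (n := n) (𝕜 := 𝕜)
  have hstar : star (T (CFC.abs A)) * T (CFC.abs A) = star (T A) * T A := by
    rw [← map_star, ← map_mul, ← map_star, ← map_mul, (CFC.abs_nonneg A).isSelfAdjoint.star_eq,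
      CFC.abs_mul_abs]
  obtain ⟨g, hg⟩ := exists_linearIsometry_apply_eq_of_norm_eq
    (T (CFC.abs A)).toLinearMap (T A).toLinearMap fun x => by
      rw [← sq_eq_sq₀ (norm_nonneg _) (norm_nonneg _)]
      simp only [ContinuousLinearMap.coe_coe,
        ContinuousLinearMap.apply_norm_sq_eq_inner_adjoint_right,
        ← ContinuousLinearMap.star_eq_adjoint]
      exact congr(RCLike.re (inner 𝕜 x ($hstar x)))
  refine ⟨T.symm g.toContinuousLinearMap, ?_, EquivLike.injective T ?_⟩
  · rw [mem_unitaryGroup_iff', ← (EquivLike.injective T).eq_iff, map_mul, map_star, map_one,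
      StarAlgEquiv.apply_symm_apply, ContinuousLinearMap.star_eq_adjoint]
    exact g.toContinuousLinearMap.norm_map_iff_adjoint_comp_self.mp g.norm_map
  · ext1 x
    simpa using hg x

end Matrix

lemma frobSq_eq_trace {m n : ℕ} (C : Matrix (Fin m) (Fin n) ℝ) :
    frobSq C = (Cᵀ * C).trace := by
  simp only [frobSq, trace, Matrix.diag, mul_apply, transpose_apply, sq]
  exact Finset.sum_comm

lemma frobSq_mul_sub_of_transpose_mul_eq_one {m n : ℕ} {Q : Matrix (Fin m) (Fin m) ℝ}
    (hQ : Qᵀ * Q = 1) (X Y : Matrix (Fin m) (Fin n) ℝ) :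
    frobSq (Q * X - Y) = frobSq X + frobSq Y - 2 * (Qᵀ * (Y * Xᵀ)).trace := by
  have hcross : (Yᵀ * (Q * X)).trace = (Qᵀ * (Y * Xᵀ)).trace := by
    rw [← trace_transpose, transpose_mul, transpose_mul, transpose_transpose, Matrix.mul_assoc,
      trace_mul_comm, Matrix.mul_assoc]
  have hexp : (Q * X - Y)ᵀ * (Q * X - Y)
      = Xᵀ * (Qᵀ * Q) * X - (Yᵀ * (Q * X))ᵀ - Yᵀ * (Q * X) + Yᵀ * Y := by
    simp only [Matrix.sub_mul, Matrix.mul_sub, transpose_sub, transpose_mul, transpose_transpose,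
      Matrix.mul_assoc]
    abel
  rw [frobSq_eq_trace, frobSq_eq_trace, frobSq_eq_trace, hexp, hQ, Matrix.mul_one, trace_add,
    trace_sub, trace_sub, trace_transpose, hcross]
  ring

lemma trace_transpose_mul_le_trace_of_posSemidef {m : ℕ} {Q P : Matrix (Fin m) (Fin m) ℝ}
    (hQ : Qᵀ * Q = 1) (hP : P.PosSemidef) : (Qᵀ * P).trace ≤ P.trace := by
  obtain ⟨B, rfl⟩ := CStarAlgebra.nonneg_iff_eq_star_mul_self.mp hP.nonneg
  -- `0 ≤ ‖Q Bᵀ - Bᵀ‖_F² = 2 tr P - 2 tr(QᵀP)` for `P = BᵀB`.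
  rw [star_eq_conjTranspose, conjTranspose_eq_transpose_of_trivial]
  have h := frobSq_mul_sub_of_transpose_mul_eq_one hQ Bᵀ Bᵀ
  rw [frobSq_eq_trace Bᵀ, transpose_transpose, trace_mul_comm] at h
  have : 0 ≤ frobSq (Q * Bᵀ - Bᵀ) := by unfold frobSq; positivity
  linarith

lemma sum_svals_eq_sum_sqrt_eigenvalues {m : ℕ} (A : Matrix (Fin m) (Fin m) ℝ)
    (hA : (Aᵀ * A).IsHermitian) : ∑ i, svals A i = ∑ i, √(hA.eigenvalues i) := by
  simp only [svals, eigsDesc, dif_pos hA]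
  exact Equiv.sum_comp (Fin.revPerm.trans (Tuple.sort hA.eigenvalues))
    fun j => √(hA.eigenvalues j)

lemma trace_abs_eq_sum_svals {m : ℕ} (A : Matrix (Fin m) (Fin m) ℝ) :
    (CFC.abs A).trace = ∑ i, svals A i := by
  have hA : (Aᵀ * A).IsHermitian := by
    simpa [conjTranspose_eq_transpose_of_trivial] using isHermitian_conjTranspose_mul_self A
  have hstar : star A * A = Aᵀ * A := by
    rw [star_eq_conjTranspose, conjTranspose_eq_transpose_of_trivial]
  rw [sum_svals_eq_sum_sqrt_eigenvalues A hA, CFC.abs,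
    CFC.sqrt_eq_real_sqrt _ (star_mul_self_nonneg A), hstar, cfcₙ_eq_cfc, hA.cfc_eq,
    IsHermitian.cfc, Unitary.conjStarAlgAut_apply, trace_mul_cycle, Unitary.coe_star_mul_self,
    Matrix.one_mul, trace_diagonal]
  rfl

lemma trace_transpose_mul_le_sum_svals {m : ℕ} {Q : Matrix (Fin m) (Fin m) ℝ}
    (hQ : Qᵀ * Q = 1) (A : Matrix (Fin m) (Fin m) ℝ) : (Qᵀ * A).trace ≤ ∑ i, svals A i := by
  obtain ⟨W, hW, hWA⟩ := exists_mem_unitaryGroup_mul_abs_eq A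
  rw [mem_orthogonalGroup_iff] at hW
  have hWQ : (Wᵀ * Q)ᵀ * (Wᵀ * Q) = 1 := by
    rw [transpose_mul, transpose_transpose, Matrix.mul_assoc, ← Matrix.mul_assoc W, hW,
      Matrix.one_mul, hQ]
  calc (Qᵀ * A).trace = ((Wᵀ * Q)ᵀ * CFC.abs A).trace := by
        rw [transpose_mul, transpose_transpose, Matrix.mul_assoc, hWA]
    _ ≤ (CFC.abs A).trace := trace_transpose_mul_le_trace_of_posSemidef hWQ
        (nonneg_iff_posSemidef.mp (CFC.abs_nonneg A))
    _ = ∑ i, svals A i := trace_abs_eq_sum_svals A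

lemma exists_trace_transpose_mul_eq_sum_svals {m : ℕ} (A : Matrix (Fin m) (Fin m) ℝ) :
    ∃ W : Matrix (Fin m) (Fin m) ℝ, Wᵀ * W = 1 ∧ (Wᵀ * A).trace = ∑ i, svals A i := by
  obtain ⟨W, hW, hWA⟩ := exists_mem_unitaryGroup_mul_abs_eq A
  rw [mem_orthogonalGroup_iff'] at hW
  refine ⟨W, hW, ?_⟩
  conv_lhs => rw [← hWA, ← Matrix.mul_assoc, hW, Matrix.one_mul]
  exact trace_abs_eq_sum_svals A

theorem isLeast_frobSq_orthogonal_mul_sub {m n : ℕ} (X Y : Matrix (Fin m) (Fin n) ℝ) :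
    IsLeast {e : ℝ | ∃ Q : Matrix (Fin m) (Fin m) ℝ, Qᵀ * Q = 1 ∧ e = frobSq (Q * X - Y)}
      (frobSq X + frobSq Y - 2 * ∑ i, svals (Y * Xᵀ) i) := by
  obtain ⟨W, hW, hWtr⟩ := exists_trace_transpose_mul_eq_sum_svals (Y * Xᵀ)
  refine ⟨⟨W, hW, by rw [frobSq_mul_sub_of_transpose_mul_eq_one hW, hWtr]⟩, ?_⟩
  rintro e ⟨Q, hQ, rfl⟩
  rw [frobSq_mul_sub_of_transpose_mul_eq_one hQ]
  linarith [trace_transpose_mul_le_sum_svals hQ (Y * Xᵀ)]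

/-- The Procrustean fitting-error
`ε²(X,Y) = inf{‖QX − Y‖_F² : QᵀQ = I}` equals
`‖X‖_F² + ‖Y‖_F² − 2·Σ_i σ_i(YXᵀ)`, and the infimum is attained
by some orthogonal matrix `Q`. -/
theorem procrustes_error_formula (m n : ℕ) (X Y : Matrix (Fin m) (Fin n) ℝ) :
    sInf {e : ℝ | ∃ Q : Matrix (Fin m) (Fin m) ℝ, Qᵀ * Q = 1 ∧ e = frobSq (Q * X - Y)}
        = frobSq X + frobSq Y - 2 * ∑ i : Fin m, svals (Y * Xᵀ) i
    ∧ ∃ Q : Matrix (Fin m) (Fin m) ℝ, Qᵀ * Q = 1 ∧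
        frobSq (Q * X - Y)
          = sInf {e : ℝ | ∃ Q' : Matrix (Fin m) (Fin m) ℝ,
              Q'ᵀ * Q' = 1 ∧ e = frobSq (Q' * X - Y)} := by
  have h := isLeast_frobSq_orthogonal_mul_sub X Y
  obtain ⟨Q, hQ, hmin⟩ := h.1
  exact ⟨h.csInf_eq, Q, hQ, by rw [h.csInf_eq, hmin]⟩
end
end

section
/- Let P, Q ∈ R^{m×m} be orthogonal projection matrices of rank k, and let C ∈ R^{m×m} be a matrix with Σ_{j=1}^k σ_j(C) > 0. Then the weighted square Hausdorff distance ð²(P,Q;C) := Σ_{i=1}^k 2·(1 − σ_i(P C Q)/((1/k)·Σ_{j=1}^k σ_j(C))) satisfies 0 ≤ ð²(P,Q;C) ≤ 2k. -/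
open Matrix MeasureTheory ProbabilityTheory Filter Finset
open scoped BigOperators Topology

noncomputable section

/-!
Let `wᵢ, zᵢ` be singular vectors of `PCQ`, so that `σᵢ(PCQ) = ⟨P wᵢ, C (Q zᵢ)⟩`. Orthogonal
projections are symmetric contractions, so the families `P wᵢ` and `Q zᵢ` still satisfy Bessel's
inequality. Expanding `C = ∑ⱼ σⱼ(C) uⱼ vⱼᵀ` and using `ab ≤ (a² + b²)/2` bounds
`∑_{i<k} σᵢ(PCQ)` by `∑ⱼ σⱼ(C) cⱼ` with weights `cⱼ ∈ [0,1]` of total mass at most `k`, hence by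
`∑_{j<k} σⱼ(C)`; this is `ð² ≥ 0`. The bound `ð² ≤ 2k` only needs `σᵢ(PCQ) ≥ 0`, and
`k = tr P ≤ m` guarantees that exactly `k` terms enter both sums.
-/

variable {m : ℕ}

lemma posSemidef_transpose_mul_self (C : Matrix (Fin m) (Fin m) ℝ) : (Cᵀ * C).PosSemidef := by
  simpa using posSemidef_conjTranspose_mul_self C

lemma eigsDesc_transpose_mul_self_nonneg (C : Matrix (Fin m) (Fin m) ℝ) (i : Fin m) :
    0 ≤ eigsDesc (Cᵀ * C) i := by
  rw [eigsDesc, dif_pos (posSemidef_transpose_mul_self C).isHermitian]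
  exact (posSemidef_transpose_mul_self C).eigenvalues_nonneg _

lemma sq_svals (C : Matrix (Fin m) (Fin m) ℝ) (i : Fin m) :
    svals C i ^ 2 = eigsDesc (Cᵀ * C) i :=
  Real.sq_sqrt (eigsDesc_transpose_mul_self_nonneg C i)

lemma svals_nonneg (C : Matrix (Fin m) (Fin m) ℝ) (i : Fin m) : 0 ≤ svals C i :=
  Real.sqrt_nonneg _

lemma svals_antitone (C : Matrix (Fin m) (Fin m) ℝ) : Antitone (svals C) := by
  intro i j hij
  refine Real.sqrt_le_sqrt ?_
  rw [eigsDesc, dif_pos (posSemidef_transpose_mul_self C).isHermitian]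
  exact Tuple.monotone_sort _ (Fin.rev_le_rev.mpr hij)

lemma dotProduct_mulVec_transpose_mul_self (C : Matrix (Fin m) (Fin m) ℝ) (x y : Fin m → ℝ) :
    x ⬝ᵥ ((Cᵀ * C) *ᵥ y) = (C *ᵥ x) ⬝ᵥ (C *ᵥ y) := by
  rw [← mulVec_mulVec, dotProduct_mulVec, vecMul_transpose]

lemma exists_right_singular_vectors (C : Matrix (Fin m) (Fin m) ℝ) :
    ∃ v : Fin m → Fin m → ℝ,
      (∀ i j, v i ⬝ᵥ v j = if i = j then 1 else 0) ∧
      (∀ y, ∑ j, (v j ⬝ᵥ y) • v j = y) ∧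
      (∀ i j, (C *ᵥ v i) ⬝ᵥ (C *ᵥ v j) = if i = j then svals C i ^ 2 else 0) := by
  set hA := (posSemidef_transpose_mul_self C).isHermitian
  set π : Equiv.Perm (Fin m) := Fin.revPerm.trans (Tuple.sort hA.eigenvalues)
  set b := hA.eigenvectorBasis
  have hortho : ∀ i j, (b (π i) : Fin m → ℝ) ⬝ᵥ b (π j) = if i = j then 1 else 0 := by
    intro i j
    have := b.inner_eq_ite (π j) (π i)
    simpa [EuclideanSpace.inner_eq_star_dotProduct, π.injective.eq_iff, eq_comm] using this
  refine ⟨fun j => b (π j), hortho, fun y => ?_, fun i j => ?_⟩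
  · have := congrArg WithLp.ofLp (b.sum_repr' (WithLp.toLp 2 y))
    rw [← Equiv.sum_comp π] at this
    simpa [EuclideanSpace.inner_eq_star_dotProduct, dotProduct_comm] using this
  · have heig : eigsDesc (Cᵀ * C) j = hA.eigenvalues (π j) := by
      rw [eigsDesc, dif_pos hA]; rfl
    rw [← dotProduct_mulVec_transpose_mul_self, hA.mulVec_eigenvectorBasis, dotProduct_smul,
      hortho, sq_svals, ← heig]
    split_ifs with hij <;> simp [hij]

def IsBesselFamily {ι : Type*} (s : Finset ι) (x : ι → Fin m → ℝ) : Prop :=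
  ∀ e : Fin m → ℝ, ∑ i ∈ s, (x i ⬝ᵥ e) ^ 2 ≤ e ⬝ᵥ e

section IsBesselFamily

variable {ι κ : Type*} {s : Finset ι} {t : Finset κ} {x : ι → Fin m → ℝ} {u : κ → Fin m → ℝ}

lemma isBesselFamily_of_orthogonal (horth : ∀ i ∈ s, ∀ j ∈ s, i ≠ j → x i ⬝ᵥ x j = 0)
    (hnorm : ∀ i ∈ s, x i ⬝ᵥ x i ≤ 1) : IsBesselFamily s x := by
  intro e
  set c : ι → ℝ := fun i => x i ⬝ᵥ e
  set p : Fin m → ℝ := ∑ i ∈ s, c i • x i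
  have hep : e ⬝ᵥ p = ∑ i ∈ s, c i ^ 2 := by
    simp only [p, dotProduct_sum, dotProduct_smul, smul_eq_mul, dotProduct_comm e (x _), c, sq]
  have hpp : p ⬝ᵥ p ≤ ∑ i ∈ s, c i ^ 2 := by
    have hpx : ∀ i ∈ s, p ⬝ᵥ x i = c i * (x i ⬝ᵥ x i) := fun i hi => by
      rw [dotProduct_comm, dotProduct_sum, Finset.sum_eq_single_of_mem i hi
        (fun j hj hji => by rw [dotProduct_smul, horth i hi j hj (Ne.symm hji), smul_zero]),
        dotProduct_smul, smul_eq_mul]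
    calc p ⬝ᵥ p = ∑ i ∈ s, c i ^ 2 * (x i ⬝ᵥ x i) := by
          simp only [p, dotProduct_sum, dotProduct_smul]
          refine Finset.sum_congr rfl fun i hi => ?_
          rw [hpx i hi, smul_eq_mul]; ring
      _ ≤ ∑ i ∈ s, c i ^ 2 :=
          Finset.sum_le_sum fun i hi => mul_le_of_le_one_right (sq_nonneg _) (hnorm i hi)
  have h0 : 0 ≤ (e - p) ⬝ᵥ (e - p) := Finset.sum_nonneg fun i _ => mul_self_nonneg _
  rw [sub_dotProduct, dotProduct_sub, dotProduct_sub, dotProduct_comm p e, hep] at h0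
  linarith

lemma IsBesselFamily.dotProduct_self_le_one (hx : IsBesselFamily s x) {i : ι} (hi : i ∈ s) :
    x i ⬝ᵥ x i ≤ 1 := by
  have hsq : (x i ⬝ᵥ x i) ^ 2 ≤ x i ⬝ᵥ x i :=
    (Finset.single_le_sum (f := fun j => (x j ⬝ᵥ x i) ^ 2) (fun _ _ => sq_nonneg _) hi).trans
      (hx (x i))
  nlinarith [Finset.sum_nonneg fun j (_ : j ∈ Finset.univ) => mul_self_nonneg (x i j)]

lemma IsBesselFamily.mono {s' : Finset ι} (hx : IsBesselFamily s x)
    (hs : s' ⊆ s) : IsBesselFamily s' x := fun e =>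
  (Finset.sum_le_sum_of_subset_of_nonneg hs fun _ _ _ => sq_nonneg _).trans (hx e)

lemma IsBesselFamily.mulVec (hx : IsBesselFamily s x) {M : Matrix (Fin m) (Fin m) ℝ}
    (hM : ∀ e, (Mᵀ *ᵥ e) ⬝ᵥ (Mᵀ *ᵥ e) ≤ e ⬝ᵥ e) : IsBesselFamily s (fun i => M *ᵥ x i) := by
  intro e
  calc ∑ i ∈ s, (M *ᵥ x i ⬝ᵥ e) ^ 2 = ∑ i ∈ s, (x i ⬝ᵥ Mᵀ *ᵥ e) ^ 2 := by
        simp only [dotProduct_comm _ e, dotProduct_mulVec, vecMul_transpose]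
    _ ≤ e ⬝ᵥ e := (hx _).trans (hM e)

lemma IsBesselFamily.sum_sq_dotProduct_le_one (hx : IsBesselFamily s x)
    (hu : IsBesselFamily t u) {j : κ} (hj : j ∈ t) : ∑ i ∈ s, (x i ⬝ᵥ u j) ^ 2 ≤ 1 :=
  (hx (u j)).trans (hu.dotProduct_self_le_one hj)

lemma IsBesselFamily.sum_sum_sq_dotProduct_le_card (hx : IsBesselFamily s x)
    (hu : IsBesselFamily t u) : ∑ j ∈ t, ∑ i ∈ s, (x i ⬝ᵥ u j) ^ 2 ≤ #s := by
  rw [Finset.sum_comm, Finset.card_eq_sum_ones, Nat.cast_sum, Nat.cast_one]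
  refine Finset.sum_le_sum fun i hi => ?_
  simp only [dotProduct_comm (x i)]
  exact (hu (x i)).trans (hx.dotProduct_self_le_one hi)

end IsBesselFamily

/-- `C = ∑ⱼ σⱼ uⱼ vⱼᵀ`; `u` need not be orthonormal, as `uⱼ = 0` is allowed when `σⱼ = 0`. -/
structure IsSingularSystem (C : Matrix (Fin m) (Fin m) ℝ) (u v : Fin m → Fin m → ℝ) : Prop where
  isBesselFamily_left : IsBesselFamily univ u
  isBesselFamily_right : IsBesselFamily univ v
  mulVec_eq_sum : ∀ y, C *ᵥ y = ∑ j, (svals C j * (v j ⬝ᵥ y)) • u j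
  dotProduct_mulVec_eq : ∀ j, u j ⬝ᵥ (C *ᵥ v j) = svals C j

lemma exists_isSingularSystem (C : Matrix (Fin m) (Fin m) ℝ) :
    ∃ u v, IsSingularSystem C u v := by
  obtain ⟨v, hvv, hvsum, hCv⟩ := exists_right_singular_vectors C
  set u : Fin m → Fin m → ℝ := fun j => (svals C j)⁻¹ • (C *ᵥ v j)
  have huu : ∀ i j, u i ⬝ᵥ u j = if i = j then (svals C i)⁻¹ ^ 2 * svals C i ^ 2 else 0 := by
    intro i j
    simp only [u, smul_dotProduct, dotProduct_smul, hCv, smul_eq_mul]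
    split_ifs with hij
    · subst hij; ring
    · ring
  have hCv_eq : ∀ j, C *ᵥ v j = svals C j • u j := by
    intro j
    rcases eq_or_ne (svals C j) 0 with h | h
    · have h0 : (C *ᵥ v j) ⬝ᵥ (C *ᵥ v j) = 0 := by simp [hCv, h]
      simp [dotProduct_self_eq_zero.mp h0, h]
    · simp [u, smul_smul, h]
  refine ⟨u, v, ⟨?_, ?_, fun y => ?_, fun j => ?_⟩⟩
  · refine isBesselFamily_of_orthogonal (fun i _ j _ hij => by simp [huu, hij]) fun i _ => ?_
    rw [huu, if_pos rfl]
    rcases eq_or_ne (svals C i) 0 with h | h <;> simp [h]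
  · exact isBesselFamily_of_orthogonal (fun i _ j _ hij => by simp [hvv, hij])
      fun i _ => by simp [hvv]
  · conv_lhs => rw [← hvsum y]
    simp only [mulVec_sum, mulVec_smul, hCv_eq, smul_smul, mul_comm]
  · rw [hCv_eq, dotProduct_smul, huu, if_pos rfl, smul_eq_mul]
    rcases eq_or_ne (svals C j) 0 with h | h
    · simp [h]
    · field_simp

lemma sum_mul_le_sum_filter_val_lt {k : ℕ} {σ c : Fin m → ℝ} (hσ : Antitone σ)
    (hσ0 : ∀ j, 0 ≤ σ j) (hc0 : ∀ j, 0 ≤ c j) (hc1 : ∀ j, c j ≤ 1) (hc : ∑ j, c j ≤ k) :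
    ∑ j, σ j * c j ≤ ∑ j ∈ univ.filter (fun j : Fin m => (j : ℕ) < k), σ j := by
  -- Compare every `σⱼ` with the threshold `t = σₖ`, the largest entry not among the top `k`.
  set t : ℝ := if h : k < m then σ ⟨k, h⟩ else 0 with ht
  have ht0 : 0 ≤ t := by rw [ht]; split_ifs <;> simp [hσ0]
  have hterm : ∀ j, (σ j - t) * c j ≤ if (j : ℕ) < k then σ j - t else 0 := by
    intro j
    split_ifs with hj
    · have : t ≤ σ j := by
        rw [ht]; split_ifs with hk
        · exact hσ (Fin.mk_le_mk.mpr hj.le)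
        · exact hσ0 j
      exact mul_le_of_le_one_right (by linarith) (hc1 j)
    · have hk : k < m := by omega
      have : σ j ≤ t := by rw [ht, dif_pos hk]; exact hσ (Fin.mk_le_mk.mpr (by omega))
      exact mul_nonpos_of_nonpos_of_nonneg (by linarith) (hc0 j)
  have hcard : t * k = t * (univ.filter (fun j : Fin m => (j : ℕ) < k)).card := by
    rw [Fin.card_filter_val_lt]
    by_cases hk : k < m
    · rw [min_eq_right hk.le]
    · simp [ht, hk]
  calc ∑ j, σ j * c j = ∑ j, (σ j - t) * c j + t * ∑ j, c j := by
        simp only [sub_mul, Finset.sum_sub_distrib, Finset.mul_sum]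
        ring
    _ ≤ ∑ j : Fin m, (if (j : ℕ) < k then σ j - t else 0) + t * k := by
        gcongr with j
        exact hterm j
    _ = ∑ j ∈ univ.filter (fun j : Fin m => (j : ℕ) < k), σ j := by
        rw [← Finset.sum_filter, hcard, Finset.sum_sub_distrib, Finset.sum_const, nsmul_eq_mul]
        ring

/-- One half of Ky Fan's maximum principle. -/
theorem sum_dotProduct_mulVec_le_sum_svals (C : Matrix (Fin m) (Fin m) ℝ) {k : ℕ} {ι : Type*}
    {s : Finset ι} (hs : #s ≤ k) {x y : ι → Fin m → ℝ} (hx : IsBesselFamily s x)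
    (hy : IsBesselFamily s y) :
    ∑ i ∈ s, x i ⬝ᵥ (C *ᵥ y i) ≤ ∑ j ∈ univ.filter (fun j : Fin m => (j : ℕ) < k), svals C j := by
  obtain ⟨u, v, hC⟩ := exists_isSingularSystem C
  set a : Fin m → ℝ := fun j => ∑ i ∈ s, (x i ⬝ᵥ u j) ^ 2
  set b : Fin m → ℝ := fun j => ∑ i ∈ s, (y i ⬝ᵥ v j) ^ 2
  have ha : ∀ j, a j ≤ 1 := fun j =>
    hx.sum_sq_dotProduct_le_one hC.isBesselFamily_left (mem_univ j)
  have hb : ∀ j, b j ≤ 1 := fun j =>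
    hy.sum_sq_dotProduct_le_one hC.isBesselFamily_right (mem_univ j)
  have hab : ∑ j, (a j + b j) / 2 ≤ k := by
    have := hx.sum_sum_sq_dotProduct_le_card hC.isBesselFamily_left
    have := hy.sum_sum_sq_dotProduct_le_card hC.isBesselFamily_right
    have : (#s : ℝ) ≤ k := by exact_mod_cast hs
    rw [← Finset.sum_div, Finset.sum_add_distrib]
    linarith
  calc ∑ i ∈ s, x i ⬝ᵥ (C *ᵥ y i)
      = ∑ j, svals C j * ∑ i ∈ s, (x i ⬝ᵥ u j) * (y i ⬝ᵥ v j) := by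
        simp only [hC.mulVec_eq_sum, dotProduct_sum, dotProduct_smul, smul_eq_mul,
          Finset.mul_sum, dotProduct_comm (v _)]
        rw [Finset.sum_comm]
        exact Finset.sum_congr rfl fun j _ => Finset.sum_congr rfl fun i _ => by ring
    _ ≤ ∑ j, svals C j * ((a j + b j) / 2) := by
        gcongr with j _
        · exact svals_nonneg C j
        · simp only [a, b, ← Finset.sum_add_distrib, Finset.sum_div]
          exact Finset.sum_le_sum fun i _ => by
            linarith [two_mul_le_add_sq (x i ⬝ᵥ u j) (y i ⬝ᵥ v j)]
    _ ≤ ∑ j ∈ univ.filter (fun j : Fin m => (j : ℕ) < k), svals C j :=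
        sum_mul_le_sum_filter_val_lt (svals_antitone C) (svals_nonneg C)
          (fun j => by positivity) (fun j => by linarith [ha j, hb j]) hab

lemma dotProduct_mulVec_self_le_of_isIdempotentElem {P : Matrix (Fin m) (Fin m) ℝ}
    (hP : P.IsSymm) (hPidem : IsIdempotentElem P) (a : Fin m → ℝ) : (P *ᵥ a) ⬝ᵥ (P *ᵥ a) ≤ a ⬝ᵥ a := by
  have hPa : (P *ᵥ a) ⬝ᵥ (P *ᵥ a) = a ⬝ᵥ (P *ᵥ a) := by
    rw [← dotProduct_mulVec_transpose_mul_self, hP.eq, hPidem.eq]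
  have h0 : 0 ≤ (a - P *ᵥ a) ⬝ᵥ (a - P *ᵥ a) := Finset.sum_nonneg fun i _ => mul_self_nonneg _
  rw [sub_dotProduct, dotProduct_sub, dotProduct_sub, dotProduct_comm (P *ᵥ a) a, hPa] at h0
  linarith

lemma trace_le_of_isIdempotentElem {P : Matrix (Fin m) (Fin m) ℝ} (hP : P.IsSymm)
    (hPidem : IsIdempotentElem P) : P.trace ≤ m := by
  have hdiag : ∀ i, P i i ≤ 1 := by
    intro i
    have hii : P i i = ∑ j, P i j ^ 2 := by
      conv_lhs => rw [← hPidem.eq, mul_apply]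
      exact Finset.sum_congr rfl fun j _ => by rw [← hP.apply i j]; ring
    have : P i i ^ 2 ≤ P i i := hii ▸ Finset.single_le_sum (f := fun j => P i j ^ 2)
      (fun _ _ => sq_nonneg _) (mem_univ i)
    nlinarith
  simpa [trace] using Finset.sum_le_sum fun i (_ : i ∈ univ) => hdiag i

theorem sum_svals_mul_mul_le (C : Matrix (Fin m) (Fin m) ℝ) {A B : Matrix (Fin m) (Fin m) ℝ}
    (hA : ∀ e, (A *ᵥ e) ⬝ᵥ (A *ᵥ e) ≤ e ⬝ᵥ e) (hB : ∀ e, (Bᵀ *ᵥ e) ⬝ᵥ (Bᵀ *ᵥ e) ≤ e ⬝ᵥ e)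
    (k : ℕ) :
    ∑ i ∈ univ.filter (fun i : Fin m => (i : ℕ) < k), svals (A * C * B) i
      ≤ ∑ j ∈ univ.filter (fun j : Fin m => (j : ℕ) < k), svals C j := by
  obtain ⟨w, z, hACB⟩ := exists_isSingularSystem (A * C * B)
  calc ∑ i ∈ univ.filter (fun i : Fin m => (i : ℕ) < k), svals (A * C * B) i
      = ∑ i ∈ univ.filter (fun i : Fin m => (i : ℕ) < k), (Aᵀ *ᵥ w i) ⬝ᵥ (C *ᵥ (B *ᵥ z i)) := by
        refine Finset.sum_congr rfl fun i _ => ?_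
        rw [← hACB.dotProduct_mulVec_eq, ← mulVec_mulVec, ← mulVec_mulVec, dotProduct_mulVec,
          ← mulVec_transpose]
    _ ≤ _ := sum_dotProduct_mulVec_le_sum_svals C (by simp [Fin.card_filter_val_lt])
        ((hACB.isBesselFamily_left.mono (subset_univ _)).mulVec (by simpa using hA))
        ((hACB.isBesselFamily_right.mono (subset_univ _)).mulVec hB)

theorem weighted_hausdorff_bounds_general (m k : ℕ) (P Q C : Matrix (Fin m) (Fin m) ℝ)
    (hP : Pᵀ = P) (hPidem : P * P = P) (hPrank : P.trace = k)
    (hQ : Qᵀ = Q) (hQidem : Q * Q = Q) :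
    0 ≤ ∑ i ∈ Finset.univ.filter (fun i : Fin m => (i : ℕ) < k),
          (2 : ℝ) * (1 - svals (P * C * Q) i /
            ((1 / (k : ℝ)) *
              ∑ j ∈ Finset.univ.filter (fun j : Fin m => (j : ℕ) < k), svals C j))
    ∧ ∑ i ∈ Finset.univ.filter (fun i : Fin m => (i : ℕ) < k),
          (2 : ℝ) * (1 - svals (P * C * Q) i /
            ((1 / (k : ℝ)) *
              ∑ j ∈ Finset.univ.filter (fun j : Fin m => (j : ℕ) < k), svals C j))
        ≤ 2 * k := by
  rcases eq_or_ne k 0 with rfl | hk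
  · simp
  have hkm : k ≤ m := by exact_mod_cast hPrank ▸ trace_le_of_isIdempotentElem hP hPidem
  set s := univ.filter (fun i : Fin m => (i : ℕ) < k)
  set T := ∑ i ∈ s, svals (P * C * Q) i
  set D := 1 / (k : ℝ) * ∑ j ∈ s, svals C j with hD
  have hTD : T ≤ k * D := by
    rw [hD, ← mul_assoc, mul_one_div_cancel (Nat.cast_ne_zero.mpr hk), one_mul]
    exact sum_svals_mul_mul_le C (dotProduct_mulVec_self_le_of_isIdempotentElem hP hPidem)
      (hQ ▸ dotProduct_mulVec_self_le_of_isIdempotentElem hQ hQidem) k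
  have hT : 0 ≤ T := Finset.sum_nonneg fun i _ => svals_nonneg _ i
  have hD0 : 0 ≤ D := mul_nonneg (by positivity) (Finset.sum_nonneg fun j _ => svals_nonneg C j)
  have hsum : ∑ i ∈ s, 2 * (1 - svals (P * C * Q) i / D) = 2 * k - 2 * (T / D) := by
    simp [s, T, mul_sub, Finset.sum_sub_distrib, ← Finset.mul_sum, ← Finset.sum_div,
      Fin.card_filter_val_lt, hkm, mul_comm]
  rw [hsum]
  constructor
  · linarith [div_le_of_le_mul₀ hD0 (Nat.cast_nonneg k) hTD]
  · linarith [div_nonneg hT hD0]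

/-- The weighted square Hausdorff distance
`ð²(P,Q;C) = Σ_{i=1}^k 2(1 − σ_i(PCQ)/((1/k)Σ_{j=1}^k σ_j(C)))`
lies in `[0, 2k]`, for rank-`k` orthogonal projections `P, Q` and a matrix `C`
with `Σ_{j=1}^k σ_j(C) > 0`. -/
theorem weighted_hausdorff_bounds (m k : ℕ) (P Q C : Matrix (Fin m) (Fin m) ℝ)
    (hP : Pᵀ = P) (hPidem : P * P = P) (hPrank : P.trace = k)
    (hQ : Qᵀ = Q) (hQidem : Q * Q = Q) (hQrank : Q.trace = k)
    (hC : 0 < ∑ j ∈ Finset.univ.filter (fun j : Fin m => (j : ℕ) < k), svals C j) :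
    0 ≤ ∑ i ∈ Finset.univ.filter (fun i : Fin m => (i : ℕ) < k),
          (2 : ℝ) * (1 - svals (P * C * Q) i /
            ((1 / (k : ℝ)) *
              ∑ j ∈ Finset.univ.filter (fun j : Fin m => (j : ℕ) < k), svals C j))
    ∧ ∑ i ∈ Finset.univ.filter (fun i : Fin m => (i : ℕ) < k),
          (2 : ℝ) * (1 - svals (P * C * Q) i /
            ((1 / (k : ℝ)) *
              ∑ j ∈ Finset.univ.filter (fun j : Fin m => (j : ℕ) < k), svals C j))
        ≤ 2 * k :=
  weighted_hausdorff_bounds_general m k P Q C hP hPidem hPrank hQ hQidem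
end
end

section
/- Let W ∈ R^{m×m} be orthogonal, let β be a nonzero real number, and let P, Q ∈ R^{m×m} be orthogonal projection matrices of rank k. Set C := β·W. Then every singular value of C equals |β|, WQWᵀ is an orthogonal projection matrix of rank k (the projection onto the image of the range of Q under W), σ_i(P C Q) = |β|·σ_i(P·(WQWᵀ)) for every i, and consequently the weighted square Hausdorff distance ð²(P,Q;C) := Σ_{i=1}^k 2·(1 − σ_i(P C Q)/((1/k)·Σ_{j=1}^k σ_j(C))) equals d²(P, WQWᵀ) := Σ_{i=1}^k 2·(1 − σ_i(P·(WQWᵀ))). -/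
open Matrix MeasureTheory ProbabilityTheory Filter Finset
open scoped BigOperators Topology

noncomputable section

/-!
Since `Cᵀ C = β² Wᵀ W = β² I`, every singular value of `C` is `|β|`, so the mean singular value
normalising `ð²` is `|β|`. Moreover `P C Q = β • (P (W Q Wᵀ)) W`, and right multiplication by an
orthogonal matrix conjugates the Gram matrix by it, which preserves the characteristic polynomial
and hence the sorted eigenvalues. Thus `σ_i(P C Q) = |β| σ_i(P (W Q Wᵀ))`, and the normalisation
cancels the factor `|β|`.
-/

open Polynomial

theorem Tuple.comp_sort_eq_of_map_univ_eq {n : ℕ} {α : Type*} [LinearOrder α] {f g : Fin n → α}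
    (h : Finset.univ.val.map f = Finset.univ.val.map g) : f ∘ Tuple.sort f = g ∘ Tuple.sort g := by
  have hperm : (List.ofFn f).Perm (List.ofFn g) := by
    rw [← Multiset.coe_eq_coe]
    simpa [Fin.univ_val_map] using h
  apply List.ofFn_injective
  refine List.Perm.eq_of_sortedLE (List.sortedLE_ofFn_iff.mpr (Tuple.monotone_sort _))
    (List.sortedLE_ofFn_iff.mpr (Tuple.monotone_sort _)) ?_
  exact ((Equiv.Perm.ofFn_comp_perm _ _).trans hperm).trans (Equiv.Perm.ofFn_comp_perm _ _).symm

theorem IsIdempotentElem.mul_mul_of_mul_eq_one {M : Type*} [Monoid M] {e u v : M}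
    (he : IsIdempotentElem e) (h : v * u = 1) : IsIdempotentElem (u * e * v) := by
  rw [IsIdempotentElem, show u * e * v * (u * e * v) = u * (e * (v * u) * e) * v by
    simp only [mul_assoc], h, mul_one, he.eq]

theorem Finset.sum_two_mul_one_sub_div_mean {ι : Type*} (s : Finset ι) {x y σ : ι → ℝ} {b : ℝ}
    (hb : b ≠ 0) (hσ : ∀ j ∈ s, σ j = b) (hxy : ∀ i ∈ s, x i = b * y i) :
    ∑ i ∈ s, 2 * (1 - x i / ((1 / (#s : ℝ)) * ∑ j ∈ s, σ j)) = ∑ i ∈ s, 2 * (1 - y i) := by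
  rcases s.eq_empty_or_nonempty with rfl | hs
  · simp
  have hmean : (1 / (#s : ℝ)) * ∑ j ∈ s, σ j = b := by
    rw [sum_congr rfl hσ, sum_const, nsmul_eq_mul]
    field_simp [hs.card_pos.ne']
  refine sum_congr rfl fun i hi => ?_
  rw [hmean, hxy i hi, mul_div_cancel_left₀ _ hb]

namespace Matrix

variable {n : Type*} [Fintype n]

theorem IsSymm.mul_mul_transpose {α : Type*} [CommSemiring α] {Q : Matrix n n α} (hQ : Q.IsSymm)
    (W : Matrix n n α) : (W * Q * Wᵀ).IsSymm := by
  rw [IsSymm, transpose_mul, transpose_mul, transpose_transpose, hQ.eq, Matrix.mul_assoc]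

theorem trace_eq_rank_of_isIdempotentElem {K : Type*} [Field K] [DecidableEq n] {Q : Matrix n n K}
    (hQ : IsIdempotentElem Q) : Q.trace = Q.rank := by
  have hL : IsIdempotentElem Q.toLin' := hQ.map Matrix.toLinAlgEquiv'
  rw [← trace_toLin'_eq, ((LinearMap.isProj_range_iff_isIdempotentElem _).mpr hL).trace, rank]
  rfl

theorem isHermitian_transpose_mul_self (A : Matrix n n ℝ) : (Aᵀ * A).IsHermitian := by
  simpa [conjTranspose_eq_transpose_of_trivial] using isHermitian_conjTranspose_mul_self A

theorem IsHermitian.charpoly_smul [DecidableEq n] {M : Matrix n n ℝ} (hM : M.IsHermitian) (c : ℝ) :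
    (c • M).charpoly = ∏ i, (X - C (c * hM.eigenvalues i)) := by
  set U : Matrix n n ℝ := (hM.eigenvectorUnitary : Matrix n n ℝ)
  have hspec : c • M = U * diagonal (fun i => c * hM.eigenvalues i) * star U := by
    conv_lhs => rw [hM.spectral_theorem, Unitary.conjStarAlgAut_apply]
    rw [← smul_mul_assoc, ← mul_smul_comm, ← diagonal_smul]
    rfl
  rw [hspec, charpoly_mul_comm, ← mul_assoc, Unitary.coe_star_mul_self, one_mul,
    charpoly_diagonal]

end Matrix

open Matrix

variable {m : ℕ}

theorem eigsDesc_eq_of_charpoly_eq_prod {M : Matrix (Fin m) (Fin m) ℝ} (hM : M.IsHermitian)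
    {f : Fin m → ℝ} (h : M.charpoly = ∏ i, (X - C (f i))) (i : Fin m) :
    eigsDesc M i = f (Tuple.sort f i.rev) := by
  have hroots : Finset.univ.val.map hM.eigenvalues = Finset.univ.val.map f := by
    have := hM.roots_charpoly_eq_eigenvalues
    rw [h, roots_prod _ _ (by simp [Finset.prod_ne_zero_iff, X_sub_C_ne_zero])] at this
    simpa using this.symm
  simp only [eigsDesc, dif_pos hM]
  exact congrFun (Tuple.comp_sort_eq_of_map_univ_eq hroots) i.rev

theorem eigsDesc_eq_of_charpoly_eq {M N : Matrix (Fin m) (Fin m) ℝ} (hM : M.IsHermitian)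
    (hN : N.IsHermitian) (h : M.charpoly = N.charpoly) : eigsDesc M = eigsDesc N := by
  simp only [eigsDesc, dif_pos hM, dif_pos hN, (hM.eigenvalues_eq_eigenvalues_iff hN).mpr h]

theorem eigsDesc_one (i : Fin m) : eigsDesc (1 : Matrix (Fin m) (Fin m) ℝ) i = 1 :=
  eigsDesc_eq_of_charpoly_eq_prod isHermitian_one (f := fun _ => 1)
    (by rw [← diagonal_one, charpoly_diagonal]) i

theorem eigsDesc_smul {c : ℝ} (hc : 0 ≤ c) {M : Matrix (Fin m) (Fin m) ℝ} (hM : M.IsHermitian)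
    (i : Fin m) : eigsDesc (c • M) i = c * eigsDesc M i := by
  have hsorted : (fun j => c * hM.eigenvalues j) ∘ Tuple.sort (fun j => c * hM.eigenvalues j) =
      (fun j => c * hM.eigenvalues j) ∘ Tuple.sort hM.eigenvalues :=
    (Tuple.comp_sort_eq_comp_iff_monotone.mpr
      ((Tuple.monotone_sort hM.eigenvalues).const_mul hc)).symm
  rw [eigsDesc_eq_of_charpoly_eq_prod (hM.smul (IsSelfAdjoint.all c)) (hM.charpoly_smul c),
    eigsDesc_eq_of_charpoly_eq_prod hM (by simpa using hM.charpoly_eq)]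
  exact congrFun hsorted i.rev

theorem eigsDesc_transpose_mul_mul {V M : Matrix (Fin m) (Fin m) ℝ} (hV : V * Vᵀ = 1)
    (hM : M.IsHermitian) : eigsDesc (Vᵀ * M * V) = eigsDesc M := by
  refine eigsDesc_eq_of_charpoly_eq ?_ hM ?_
  · simpa [conjTranspose_eq_transpose_of_trivial] using isHermitian_conjTranspose_mul_mul V hM
  · rw [charpoly_mul_comm, ← mul_assoc, hV, one_mul]

theorem svals_smul (c : ℝ) (A : Matrix (Fin m) (Fin m) ℝ) (i : Fin m) :
    svals (c • A) i = |c| * svals A i := by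
  have hgram : (c • A)ᵀ * (c • A) = (c * c) • (Aᵀ * A) := by
    rw [transpose_smul, smul_mul_smul_comm]
  rw [svals, svals, hgram, eigsDesc_smul (mul_self_nonneg c) (isHermitian_transpose_mul_self A),
    Real.sqrt_mul (mul_self_nonneg c), Real.sqrt_mul_self_eq_abs]

theorem svals_mul_of_mul_transpose_eq_one {V : Matrix (Fin m) (Fin m) ℝ} (hV : V * Vᵀ = 1)
    (A : Matrix (Fin m) (Fin m) ℝ) : svals (A * V) = svals A := by
  have hgram : (A * V)ᵀ * (A * V) = Vᵀ * (Aᵀ * A) * V := by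
    simp only [transpose_mul, Matrix.mul_assoc]
  funext i
  rw [svals, svals, hgram, eigsDesc_transpose_mul_mul hV (isHermitian_transpose_mul_self A)]

theorem svals_eq_one_of_transpose_mul_self {W : Matrix (Fin m) (Fin m) ℝ} (hW : Wᵀ * W = 1)
    (i : Fin m) : svals W i = 1 := by
  rw [svals, hW, eigsDesc_one, Real.sqrt_one]

theorem isometry_corrective_property_general (m k : ℕ) (W P Q : Matrix (Fin m) (Fin m) ℝ) (β : ℝ)
    (hW : Wᵀ * W = 1) (hβ : β ≠ 0)
    (hQ : Qᵀ = Q) (hQidem : Q * Q = Q) (hQrank : Q.trace = k) :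
    (∀ i : Fin m, svals (β • W) i = |β|) ∧
    ((W * Q * Wᵀ)ᵀ = W * Q * Wᵀ ∧ (W * Q * Wᵀ) * (W * Q * Wᵀ) = W * Q * Wᵀ ∧
      (W * Q * Wᵀ).trace = (k : ℝ)) ∧
    (∀ i : Fin m, svals (P * (β • W) * Q) i = |β| * svals (P * (W * Q * Wᵀ)) i) ∧
    (∑ i ∈ Finset.univ.filter (fun i : Fin m => (i : ℕ) < k),
        (2 : ℝ) * (1 - svals (P * (β • W) * Q) i /
          ((1 / (k : ℝ)) *
            ∑ j ∈ Finset.univ.filter (fun j : Fin m => (j : ℕ) < k), svals (β • W) j))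
      = ∑ i ∈ Finset.univ.filter (fun i : Fin m => (i : ℕ) < k),
          (2 : ℝ) * (1 - svals (P * (W * Q * Wᵀ)) i)) := by
  have hsvals_C (i : Fin m) : svals (β • W) i = |β| := by
    rw [svals_smul, svals_eq_one_of_transpose_mul_self hW, mul_one]
  have hsvals_PCQ (i : Fin m) :
      svals (P * (β • W) * Q) i = |β| * svals (P * (W * Q * Wᵀ)) i := by
    have hassoc : P * (W * Q * Wᵀ) = P * W * Q * Wᵀ := by simp only [Matrix.mul_assoc]
    rw [mul_smul_comm, smul_mul_assoc, svals_smul, hassoc,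
      svals_mul_of_mul_transpose_eq_one (by rwa [transpose_transpose]) (P * W * Q)]
  have hkm : k ≤ m := by
    have hrank := trace_eq_rank_of_isIdempotentElem hQidem
    rw [hQrank, Nat.cast_inj] at hrank
    exact hrank ▸ rank_le_width Q
  have hcard : #{i : Fin m | (i : ℕ) < k} = k := by rw [Fin.card_filter_val_lt, min_eq_right hkm]
  refine ⟨hsvals_C, ⟨(IsSymm.mul_mul_transpose hQ W).eq,
    IsIdempotentElem.mul_mul_of_mul_eq_one hQidem hW, by rw [trace_mul_cycle, hW, one_mul, hQrank]⟩,
    hsvals_PCQ, ?_⟩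
  have hmean := sum_two_mul_one_sub_div_mean {i : Fin m | (i : ℕ) < k} (abs_ne_zero.mpr hβ)
    (fun j _ => hsvals_C j) (fun i _ => hsvals_PCQ i)
  rwa [hcard] at hmean

/-- (Isometry-corrective property of `ð²`.)
For `W` orthogonal, `β ≠ 0`, `C := β·W`, and rank-`k` orthogonal projections `P, Q`:
every singular value of `C` equals `|β|`; `WQWᵀ` is a rank-`k` orthogonal projection;
`σ_i(PCQ) = |β|·σ_i(P·(WQWᵀ))` for every `i`; and consequently
`ð²(P,Q;C) = d²(P, WQWᵀ)`. -/
theorem isometry_corrective_property (m k : ℕ) (W P Q : Matrix (Fin m) (Fin m) ℝ) (β : ℝ)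
    (hW : Wᵀ * W = 1) (hβ : β ≠ 0)
    (hP : Pᵀ = P) (hPidem : P * P = P) (hPrank : P.trace = k)
    (hQ : Qᵀ = Q) (hQidem : Q * Q = Q) (hQrank : Q.trace = k) :
    (∀ i : Fin m, svals (β • W) i = |β|) ∧
    ((W * Q * Wᵀ)ᵀ = W * Q * Wᵀ ∧ (W * Q * Wᵀ) * (W * Q * Wᵀ) = W * Q * Wᵀ ∧
      (W * Q * Wᵀ).trace = (k : ℝ)) ∧
    (∀ i : Fin m, svals (P * (β • W) * Q) i = |β| * svals (P * (W * Q * Wᵀ)) i) ∧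
    (∑ i ∈ Finset.univ.filter (fun i : Fin m => (i : ℕ) < k),
        (2 : ℝ) * (1 - svals (P * (β • W) * Q) i /
          ((1 / (k : ℝ)) *
            ∑ j ∈ Finset.univ.filter (fun j : Fin m => (j : ℕ) < k), svals (β • W) j))
      = ∑ i ∈ Finset.univ.filter (fun i : Fin m => (i : ℕ) < k),
          (2 : ℝ) * (1 - svals (P * (W * Q * Wᵀ)) i)) :=
  isometry_corrective_property_general m k W P Q β hW hβ hQ hQidem hQrank
end
end

section
/- Let (X^(i))_{i≥1} be i.i.d. random vectors in R^m with square-integrable entries and covariance matrix Cov(X) = α·I_m for some α > 0. For each n let X^(n) := [X^(1)|...|X^(n)] ∈ R^{m×n}, let H_n := I_n − (1/n)J_n, and let (P_n)_{n≥1} be ANY sequence of (random or deterministic) orthogonal projection matrices of rank k. Then almost surely, trace((1/(n−1))·P_n X^(n) H_n H_nᵀ X^(n)ᵀ P_nᵀ) → α·k as n → ∞. -/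
open Matrix MeasureTheory ProbabilityTheory Filter Finset
open scoped BigOperators Topology

noncomputable section

/-- Cross-covariance matrix `Cov(X,Y) = E[(X−EX)(Y−EY)ᵀ]` of two random
vectors in `R^m` (entrywise Bochner integrals). -/
def covMat {Ω : Type*} [MeasurableSpace Ω] (μ : Measure Ω) {m : ℕ}
    (X Y : Ω → Fin m → ℝ) : Matrix (Fin m) (Fin m) ℝ :=
  Matrix.of fun i j =>
    ∫ ω, (X ω i - ∫ ω', X ω' i ∂μ) * (Y ω j - ∫ ω', Y ω' j ∂μ) ∂μ

/-- The data matrix `[X^(1) | ... | X^(n)] ∈ R^{m×n}`. -/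
def dataMat {Ω : Type*} {m : ℕ} (X : ℕ → Ω → Fin m → ℝ) (n : ℕ) (ω : Ω) :
    Matrix (Fin m) (Fin n) ℝ :=
  Matrix.of fun i j => X (j : ℕ) ω i

/-- The `n × n` centering matrix `H_n = I_n − (1/n)J_n`. -/
def centering (n : ℕ) : Matrix (Fin n) (Fin n) ℝ :=
  1 - ((n : ℝ))⁻¹ • Matrix.of (fun _ _ => (1 : ℝ))

/-! Both `Pₙ` and `Hₙ` are symmetric idempotents, so the trace equals `tr(Pₙ Sₙ)` for the sample
covariance `Sₙ = (n-1)⁻¹ X⁽ⁿ⁾ Hₙ X⁽ⁿ⁾ᵀ`. Applying the strong law of large numbers to the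
coordinates `Xᵢ` and the products `Xᵢ Xⱼ` gives `Sₙ → Cov(X) = α I` almost surely. The sequence
`Pₙ` need not converge, but the entries of an orthogonal projection are bounded by `1`, so
`tr(Pₙ (Sₙ - α I)) → 0`, while `tr(Pₙ α I) = α k`. -/

theorem abs_apply_le_one_of_symm_of_idempotent {ι : Type*} [Fintype ι] {Q : Matrix ι ι ℝ}
    (hsymm : Qᵀ = Q) (hidem : IsIdempotentElem Q) (i j : ι) : |Q i j| ≤ 1 := by
  have hdiag : ∀ a, Q a a = ∑ l, Q a l ^ 2 := fun a => by
    conv_lhs => rw [← hidem.eq, ← congrArg (fun M => (Q * M) a a) hsymm]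
    simp [mul_apply, sq]
  have hsq_le : ∀ b, Q i b ^ 2 ≤ Q i i := fun b =>
    hdiag i ▸ single_le_sum (f := fun l => Q i l ^ 2) (fun _ _ => sq_nonneg _) (mem_univ b)
  have hdiag_le : Q i i ≤ 1 := by nlinarith [hsq_le i]
  exact (sq_le_one_iff_abs_le_one _).1 ((hsq_le j).trans hdiag_le)

theorem trace_mul_mul_self_of_idempotent {ι R : Type*} [Fintype ι] [CommSemiring R]
    {Q : Matrix ι ι R} (hidem : IsIdempotentElem Q) (M : Matrix ι ι R) :
    trace (Q * M * Q) = trace (Q * M) := by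
  rw [trace_mul_cycle, hidem.eq]

theorem centering_transpose (n : ℕ) : (centering n)ᵀ = centering n := by
  ext i j
  simp [centering, one_apply, eq_comm]

theorem isIdempotentElem_centering (n : ℕ) : IsIdempotentElem (centering n) := by
  rcases eq_or_ne n 0 with rfl | hn
  · exact Subsingleton.elim _ _
  have hJ : (of fun _ _ => (1 : ℝ) : Matrix (Fin n) (Fin n) ℝ) * of (fun _ _ => 1)
      = (n : ℝ) • of (fun _ _ => 1) := by
    ext i j; simp [mul_apply]
  have hn' : (n : ℝ) ≠ 0 := Nat.cast_ne_zero.2 hn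
  simp only [IsIdempotentElem, centering, sub_mul, mul_sub, one_mul, mul_one, smul_mul_smul, hJ,
    smul_smul]
  rw [mul_assoc, inv_mul_cancel₀ hn', mul_one, sub_self, sub_zero]

theorem mul_centering_mul_transpose_apply {ι : Type*} {n : ℕ} (A : Matrix ι (Fin n) ℝ)
    (i j : ι) : (A * centering n * Aᵀ) i j
      = ∑ l, A i l * A j l - (n : ℝ)⁻¹ * (∑ l, A i l) * ∑ l, A j l := by
  have hAH : ∀ l, (A * centering n) i l = A i l - (n : ℝ)⁻¹ * ∑ l', A i l' := fun l => by
    simp [centering, mul_sub, mul_apply, one_apply, Finset.sum_mul, mul_comm]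
  rw [mul_apply]
  simp only [transpose_apply, hAH, sub_mul, Finset.sum_sub_distrib, Finset.mul_sum, Finset.sum_mul]

theorem tendsto_trace_mul_sub_of_bounded {ι β : Type*} [Fintype ι] {l : Filter β}
    {Q S : β → Matrix ι ι ℝ} {S₀ : Matrix ι ι ℝ} {C : ℝ} (hQ : ∀ b i j, |Q b i j| ≤ C)
    (hS : Tendsto S l (𝓝 S₀)) :
    Tendsto (fun b => trace (Q b * S b) - trace (Q b * S₀)) l (𝓝 0) := by
  simp_rw [← trace_sub, ← Matrix.mul_sub, trace, diag_apply, mul_apply]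
  rw [← sum_const_zero (s := (univ : Finset ι))]
  refine tendsto_finsetSum _ fun i _ => ?_
  rw [← sum_const_zero (s := (univ : Finset ι))]
  refine tendsto_finsetSum _ fun j _ => ?_
  have hQij : IsBoundedUnder (· ≤ ·) l fun b => ‖Q b i j‖ :=
    isBoundedUnder_of ⟨C, fun b => hQ b i j⟩
  have hSji : Tendsto (fun b => (S b - S₀) j i) l (𝓝 0) := by
    simpa using (tendsto_pi_nhds.1 (tendsto_pi_nhds.1 hS j) i).sub_const (S₀ j i)
  exact isBoundedUnder_le_mul_tendsto_zero hQij hSji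

section SampleCovariance

variable {Ω : Type*} {m : ℕ}

def sampleCov (X : ℕ → Ω → Fin m → ℝ) (n : ℕ) (ω : Ω) : Matrix (Fin m) (Fin m) ℝ :=
  ((n : ℝ) - 1)⁻¹ • (dataMat X n ω * centering n * (dataMat X n ω)ᵀ)

/-- The factor is written `n / (n + -1)` to match `tendsto_natCast_div_add_atTop`; the identity
holds for all `n`, the cases `n = 0, 1` by the junk value `0⁻¹ = 0`. -/
theorem sampleCov_apply (X : ℕ → Ω → Fin m → ℝ) (n : ℕ) (ω : Ω) (i j : Fin m) :
    sampleCov X n ω i j = n / (n + -1) * ((∑ l ∈ range n, X l ω i * X l ω j) / n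
      - (∑ l ∈ range n, X l ω i) / n * ((∑ l ∈ range n, X l ω j) / n)) := by
  rw [sampleCov, Matrix.smul_apply, mul_centering_mul_transpose_apply]
  simp only [dataMat, of_apply, Fin.sum_univ_eq_sum_range (fun l => X l ω i) n,
    Fin.sum_univ_eq_sum_range (fun l => X l ω j) n,
    Fin.sum_univ_eq_sum_range (fun l => X l ω i * X l ω j) n]
  rcases eq_or_ne n 0 with rfl | hn
  · simp
  · rw [smul_eq_mul, ← sub_eq_add_neg]
    field_simp

variable [MeasurableSpace Ω] {μ : Measure Ω}

theorem strong_law_ae_real_comp {E : Type*} [MeasurableSpace E] {X : ℕ → Ω → E}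
    (hindep : Pairwise fun i j => IndepFun (X i) (X j) μ)
    (hident : ∀ i, IdentDistrib (X i) (X 0) μ μ) {g : E → ℝ} (hg : Measurable g)
    (hint : Integrable (fun ω => g (X 0 ω)) μ) :
    ∀ᵐ ω ∂μ, Tendsto (fun n : ℕ => (∑ i ∈ range n, g (X i ω)) / n) atTop
      (𝓝 (∫ ω, g (X 0 ω) ∂μ)) :=
  strong_law_ae_real (fun i ω => g (X i ω)) hint (fun _ _ hij => (hindep hij).comp hg hg)
    fun i => (hident i).comp hg

theorem ae_tendsto_sampleCov [IsProbabilityMeasure μ] {X : ℕ → Ω → Fin m → ℝ}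
    (hindep : Pairwise fun i j => IndepFun (X i) (X j) μ)
    (hident : ∀ i, IdentDistrib (X i) (X 0) μ μ) (hL2 : ∀ j, MemLp (fun ω => X 0 ω j) 2 μ) :
    ∀ᵐ ω ∂μ, Tendsto (fun n => sampleCov X n ω) atTop (𝓝 (covMat μ (X 0) (X 0))) := by
  have hmean : ∀ i, ∀ᵐ ω ∂μ, Tendsto (fun n : ℕ => (∑ l ∈ range n, X l ω i) / n) atTop
      (𝓝 (∫ ω, X 0 ω i ∂μ)) := fun i =>
    strong_law_ae_real_comp (g := fun v => v i) hindep hident (measurable_pi_apply i)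
      ((hL2 i).integrable one_le_two)
  have hmoment : ∀ i j, ∀ᵐ ω ∂μ,
      Tendsto (fun n : ℕ => (∑ l ∈ range n, X l ω i * X l ω j) / n) atTop
        (𝓝 (∫ ω, X 0 ω i * X 0 ω j ∂μ)) := fun i j =>
    strong_law_ae_real_comp (g := fun v => v i * v j) hindep hident
      ((measurable_pi_apply i).mul (measurable_pi_apply j)) ((hL2 i).integrable_mul (hL2 j))
  have hcov : ∀ i j, covMat μ (X 0) (X 0) i j
      = ∫ ω, X 0 ω i * X 0 ω j ∂μ - (∫ ω, X 0 ω i ∂μ) * ∫ ω, X 0 ω j ∂μ := fun i j =>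
    covariance_eq_sub (hL2 i) (hL2 j)
  filter_upwards [ae_all_iff.2 hmean, ae_all_iff.2 fun i => ae_all_iff.2 (hmoment i)]
    with ω hmeanω hmomentω
  refine tendsto_pi_nhds.2 fun i => tendsto_pi_nhds.2 fun j => ?_
  simpa only [sampleCov_apply, hcov, one_mul] using
    (tendsto_natCast_div_add_atTop (-1 : ℝ)).mul
      ((hmomentω i j).sub ((hmeanω i).mul (hmeanω j)))

end SampleCovariance

theorem trace_any_projection_tendsto_isotropic_general
    {Ω : Type*} [MeasurableSpace Ω] (μ : Measure Ω) [IsProbabilityMeasure μ]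
    (m k : ℕ) (α : ℝ) (X : ℕ → Ω → Fin m → ℝ)
    (hindep : iIndepFun X μ)
    (hident : ∀ i, μ.map (X i) = μ.map (X 0))
    (hL2 : ∀ i j, MemLp (fun ω => X i ω j) 2 μ)
    (hcov : covMat μ (X 0) (X 0) = α • (1 : Matrix (Fin m) (Fin m) ℝ))
    (P : ℕ → Ω → Matrix (Fin m) (Fin m) ℝ)
    (hproj : ∀ n ω, (P n ω)ᵀ = P n ω ∧ P n ω * P n ω = P n ω ∧ (P n ω).trace = (k : ℝ)) :
    ∀ᵐ ω ∂μ, Tendsto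
      (fun n : ℕ =>
        (((n : ℝ) - 1)⁻¹ •
          (P n ω * dataMat X n ω * centering n * (centering n)ᵀ * (dataMat X n ω)ᵀ *
            (P n ω)ᵀ)).trace)
      atTop (nhds (α * k)) := by
  have hmeas : ∀ i, AEMeasurable (X i) μ := fun i =>
    aemeasurable_pi_iff.2 fun j => (hL2 i j).aestronglyMeasurable.aemeasurable
  filter_upwards [ae_tendsto_sampleCov (fun _ _ hij => hindep.indepFun hij)
    (fun i => ⟨hmeas i, hmeas 0, hident i⟩) (hL2 0)] with ω hω
  rw [hcov] at hω
  have htrace : ∀ n : ℕ, (((n : ℝ) - 1)⁻¹ • (P n ω * dataMat X n ω * centering n *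
      (centering n)ᵀ * (dataMat X n ω)ᵀ * (P n ω)ᵀ)).trace = (P n ω * sampleCov X n ω).trace := by
    intro n
    rw [(hproj n ω).1, centering_transpose, sampleCov, Matrix.mul_smul, trace_smul, trace_smul,
      ← trace_mul_mul_self_of_idempotent (hproj n ω).2.1]
    simp only [Matrix.mul_assoc, (isIdempotentElem_centering n).eq]
  have hlimit : ∀ n, (P n ω * α • 1).trace = α * k := fun n => by
    rw [Matrix.mul_smul, Matrix.mul_one, trace_smul, (hproj n ω).2.2, smul_eq_mul]
  have hQ := fun n => abs_apply_le_one_of_symm_of_idempotent (hproj n ω).1 (hproj n ω).2.1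
  have h := (tendsto_trace_mul_sub_of_bounded hQ hω).add_const (α * k)
  simp only [hlimit, sub_add_cancel, zero_add] at h
  simpa only [htrace] using h

/-- (Lemma 2 of the paper, isotropic case.) For i.i.d. square-integrable
random vectors `X^(i)` with `Cov(X) = α·I_m` (`α > 0`), and ANY sequence of rank-`k`
orthogonal projections `P_n`, almost surely
`trace((1/(n−1)) P_n X^(n)H_nH_nᵀX^(n)ᵀ P_nᵀ) → α·k`. -/
theorem trace_any_projection_tendsto_isotropic
    {Ω : Type*} [MeasurableSpace Ω] (μ : Measure Ω) [IsProbabilityMeasure μ]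
    (m k : ℕ) (α : ℝ) (hα : 0 < α) (X : ℕ → Ω → Fin m → ℝ)
    (hindep : iIndepFun X μ)
    (hident : ∀ i, μ.map (X i) = μ.map (X 0))
    (hL2 : ∀ i j, MemLp (fun ω => X i ω j) 2 μ)
    (hcov : covMat μ (X 0) (X 0) = α • (1 : Matrix (Fin m) (Fin m) ℝ))
    (P : ℕ → Ω → Matrix (Fin m) (Fin m) ℝ)
    (hproj : ∀ n ω, (P n ω)ᵀ = P n ω ∧ P n ω * P n ω = P n ω ∧ (P n ω).trace = (k : ℝ)) :
    ∀ᵐ ω ∂μ, Tendsto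
      (fun n : ℕ =>
        (((n : ℝ) - 1)⁻¹ •
          (P n ω * dataMat X n ω * centering n * (centering n)ᵀ * (dataMat X n ω)ᵀ *
            (P n ω)ᵀ)).trace)
      atTop (nhds (α * k)) :=
  trace_any_projection_tendsto_isotropic_general μ m k α X hindep hident hL2 hcov P hproj
end
end
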